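/- arXiv:1001.2662 — 2 statements merged into one kernel-verified Lean document; each statement's English description precedes it below -/
import Mathlib

section
/- For any q-ary DMC W and any a, b ∈ 𝒳, one has Σ_{y : Σ_{c∈𝒳} W(y|c) > 0} W(y|a)·W(y|b) / (Σ_{c∈𝒳} W(y|c)) ≥ (1/q) · Z_{a,b}(W)². -/
/-! Write `S y = ∑_c W(y|c)`. Since `√(W(y|a) W(y|b))² = (W(y|a) W(y|b) / S y) · S y`, the
Cauchy–Schwarz inequality for series gives `Z_{a,b}(W)² ≤ (∑_y W(y|a) W(y|b) / S y) · ∑_y S y`,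
and `∑_y S y = q` because every row of `W` sums to `1`. Outputs with `S y = 0` cost nothing:
there `W(y|a) = 0`. -/

open MeasureTheory Filter Real
open scoped Classical

noncomputable section

namespace Polar

/-- `IsChannel W` : `W x y` is the probability of output `y` given input `x`,
each row is a probability distribution. -/
def IsChannel {X Y : Type*} (W : X → Y → ℝ) : Prop :=
  (∀ x y, 0 ≤ W x y) ∧ ∀ x, HasSum (W x) 1

/-- Bhattacharyya parameter `Z_{x,x'}(W)` between inputs `x` and `x'`. -/
def Zb {X Y : Type*} (W : X → Y → ℝ) (x x' : X) : ℝ :=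
  ∑' y, Real.sqrt (W x y * W x' y)

theorem tsum_sq_le_tsum_mul_tsum_of_sq_le_mul {ι : Type*} {r f g : ι → ℝ}
    (hf : ∀ i, 0 ≤ f i) (hg : ∀ i, 0 ≤ g i) (hf_sum : Summable f) (hg_sum : Summable g)
    (ht : ∀ i, r i ^ 2 ≤ f i * g i) : (∑' i, r i) ^ 2 ≤ (∑' i, f i) * ∑' i, g i := by
  by_cases hr : Summable r
  · refine le_of_tendsto' (hr.hasSum.pow 2) fun s => ?_
    calc (∑ i ∈ s, r i) ^ 2 ≤ (∑ i ∈ s, f i) * ∑ i ∈ s, g i :=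
          Finset.sum_sq_le_sum_mul_sum_of_sq_le_mul s (fun i _ => hf i) (fun i _ => hg i)
            fun i _ => ht i
      _ ≤ (∑' i, f i) * ∑' i, g i :=
          mul_le_mul (hf_sum.sum_le_tsum s fun i _ => hf i)
            (hg_sum.sum_le_tsum s fun i _ => hg i) (Finset.sum_nonneg fun i _ => hg i)
            (tsum_nonneg hf)
  · rw [tsum_eq_zero_of_not_summable hr, sq, zero_mul]
    exact mul_nonneg (tsum_nonneg hf) (tsum_nonneg hg)

section IteDiv

variable {u v s : ℝ}

theorem ite_pos_div_nonneg (huv : 0 ≤ u * v) : 0 ≤ if 0 < s then u * v / s else 0 := by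
  split_ifs with hs
  · exact div_nonneg huv hs.le
  · exact le_rfl

theorem ite_pos_div_le (hu : 0 ≤ u) (hvs : v ≤ s) : (if 0 < s then u * v / s else 0) ≤ u := by
  split_ifs with hs
  · rw [div_le_iff₀ hs]
    exact mul_le_mul_of_nonneg_left hvs hu
  · exact hu

theorem mul_eq_ite_pos_div_mul (hu : 0 ≤ u) (hus : u ≤ s) :
    u * v = (if 0 < s then u * v / s else 0) * s := by
  split_ifs with hs
  · field_simp
  · obtain rfl : u = 0 := by linarith [not_lt.mp hs]
    simp

end IteDiv

namespace IsChannel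

variable {X Y : Type*} {W : X → Y → ℝ}

theorem summable (hW : IsChannel W) (x : X) : Summable (W x) :=
  (hW.2 x).summable

theorem le_sum_inputs [Fintype X] (hW : IsChannel W) (x : X) (y : Y) :
    W x y ≤ ∑ c : X, W c y :=
  Finset.single_le_sum (fun c _ => hW.1 c y) (Finset.mem_univ x)

theorem hasSum_sum_inputs [Fintype X] (hW : IsChannel W) :
    HasSum (fun y => ∑ c : X, W c y) (Fintype.card X) := by
  simpa using hasSum_sum fun c (_ : c ∈ Finset.univ) => hW.2 c

end IsChannel

theorem bhattacharyya_sq_le_general {X Y : Type*} [Fintype X]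
    (W : X → Y → ℝ) (hW : IsChannel W) (a b : X) :
    (1 / (Fintype.card X : ℝ)) * Zb W a b ^ 2 ≤
      ∑' y, (if 0 < ∑ c : X, W c y then W a y * W b y / ∑ c : X, W c y else 0) := by
  have hW_ab : ∀ y, 0 ≤ W a y * W b y := fun y => mul_nonneg (hW.1 a y) (hW.1 b y)
  have hS := hW.hasSum_sum_inputs
  have hCS : Zb W a b ^ 2 ≤
      (∑' y, (if 0 < ∑ c : X, W c y then W a y * W b y / ∑ c : X, W c y else 0)) *
        Fintype.card X := by
    rw [Zb, ← hS.tsum_eq]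
    refine tsum_sq_le_tsum_mul_tsum_of_sq_le_mul (fun y => ite_pos_div_nonneg (hW_ab y))
      (fun y => Finset.sum_nonneg fun c _ => hW.1 c y) ?_ hS.summable fun y => ?_
    · exact (hW.summable a).of_nonneg_of_le (fun y => ite_pos_div_nonneg (hW_ab y))
        fun y => ite_pos_div_le (hW.1 a y) (hW.le_sum_inputs b y)
    · rw [sq_sqrt (hW_ab y)]
      exact (mul_eq_ite_pos_div_mul (hW.1 a y) (hW.le_sum_inputs a y)).le
  have hq : (0 : ℝ) < Fintype.card X := by exact_mod_cast Fintype.card_pos_iff.mpr ⟨a⟩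
  rw [one_div, inv_mul_le_iff₀ hq, mul_comm]
  exact hCS

/-- `Σ_{y : Σ_c W(y|c) > 0} W(y|a) W(y|b) / Σ_c W(y|c)
≥ (1/q) Z_{a,b}(W)²`. -/
theorem bhattacharyya_sq_le {X Y : Type*} [Fintype X] [Countable Y]
    (hq : 2 ≤ Fintype.card X) (W : X → Y → ℝ) (hW : IsChannel W) (a b : X) :
    (1 / (Fintype.card X : ℝ)) * Zb W a b ^ 2 ≤
      ∑' y, (if 0 < ∑ c : X, W c y then W a y * W b y / ∑ c : X, W c y else 0) :=
  bhattacharyya_sq_le_general W hW a b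

end Polar
end
end

section
/- Let {𝒴_n} be a sequence of at most countable sets, {W_n : 𝒳 → 𝒴_n} a sequence of q-ary DMCs, and σ, τ permutations of 𝒳. Define W'_n(y₁,y₂|x) := W_n(y₁|σ(x))·W_n(y₂|τ(x)). If lim_{n→∞} ( I(W'_n) − I(W_n) ) = 0, then for every δ ∈ (0,1/2) there exists m such that for every n ≥ m and every x, x' ∈ 𝒳, the average Bhattacharyya parameter Z^{τ∘σ⁻¹}_{x,x'}(W_n) lies outside the open interval (δ, 1−δ). -/
open MeasureTheory Filter Real
open scoped Classical

noncomputable section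

namespace Polar

/-- Symmetric capacity `I(W)` (logarithms to base `q = |X|`). -/
def symCap {X Y : Type*} [Fintype X] (W : X → Y → ℝ) : ℝ :=
  ∑ x, ∑' y, (1 / (Fintype.card X : ℝ)) * W x y *
    Real.logb (Fintype.card X) (W x y / ((1 / (Fintype.card X : ℝ)) * ∑ x', W x' y))

/-- Average Bhattacharyya parameter `Z^σ_{x,x'}(W)` with respect to a
permutation `σ` of the input alphabet. -/
def ZbAvgPerm {X Y : Type*} [Fintype X] (W : X → Y → ℝ) (σ : Equiv.Perm X)
    (x x' : X) : ℝ :=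
  (1 / (Nat.factorial (Fintype.card X) : ℝ)) *
    ∑ i ∈ Finset.range (Nat.factorial (Fintype.card X)),
      Zb W ((σ ^ i) x) ((σ ^ i) x')

/-!
The chain rule writes `I(W') - I(W)` as `(q ln q)⁻¹ ∑_{y₁} ∑_x W(y₁|σx) D(W(·|τx) ‖ M_{y₁})`,
where `M_{y₁}` is the conditional law of `y₂` given `y₁`. Bounding each divergence below by the
squared Hellinger distance and keeping only the inputs `x₀, x₀'`, the two-point inequality
`p h²(P,M) + p' h²(Q,M) ≥ pp'/(p+p') h²(P,Q)` and Cauchy–Schwarz over `y₁` give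
`I(W') - I(W) ≥ 2/(q² ln q) · Z_{σx₀,σx₀'}(W)² (1 - Z_{τx₀,τx₀'}(W))`.
So once the gap is below `2δ³/(q² ln q)`, with `ρ = τσ⁻¹`, `Z_{u,u'} > δ` forces
`Z_{ρu,ρu'} > 1 - δ`. As `ρ^{q!} = 1`, one term of the average above `δ` propagates to all of them.
-/

lemma sub_le_mul_log_div {b m : ℝ} (hb : 0 ≤ b) (hm : 0 ≤ m) (hbm : m = 0 → b = 0) :
    b - m ≤ b * log (b / m) := by
  rcases hb.eq_or_lt with rfl | hb
  · simpa using hm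
  have hm : 0 < m := hm.lt_of_ne fun h => hb.ne' (hbm h.symm)
  have h := one_sub_inv_le_log_of_pos (div_pos hb hm)
  rw [inv_div] at h
  calc b - m = b * (1 - m / b) := by field_simp
    _ ≤ b * log (b / m) := mul_le_mul_of_nonneg_left h hb.le

lemma two_mul_sub_sqrt_mul_le_mul_log_div {b m : ℝ} (hb : 0 ≤ b) (hm : 0 ≤ m)
    (hbm : m = 0 → b = 0) : 2 * (b - √(b * m)) ≤ b * log (b / m) := by
  rcases hb.eq_or_lt with rfl | hb
  · simp
  have hm : 0 < m := hm.lt_of_ne fun h => hb.ne' (hbm h.symm)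
  have hsqrt : √(b * m) = b * √(m / b) := by
    rw [← sqrt_sq hb.le, ← sqrt_mul (sq_nonneg b), sqrt_sq hb.le]
    congr 1
    field_simp
  -- `log √(m/b) ≤ √(m/b) - 1`, multiplied by `2b`
  have h := log_le_sub_one_of_pos (sqrt_pos.2 (div_pos hm hb))
  rw [log_sqrt (div_pos hm hb).le, log_div hm.ne' hb.ne'] at h
  rw [log_div hb.ne' hm.ne', hsqrt]
  nlinarith

lemma mul_log_div_le_mul_log {b m c : ℝ} (hb : 0 ≤ b) (hm : 0 ≤ m) (hbm : b ≤ c * m) :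
    b * log (b / m) ≤ b * log c := by
  rcases hb.eq_or_lt with rfl | hb
  · simp
  have hcm : 0 < c * m := hb.trans_le hbm
  have hm : 0 < m := hm.lt_of_ne fun h => by simp [← h] at hcm
  refine mul_le_mul_of_nonneg_left (log_le_log (div_pos hb hm) ?_) hb.le
  rwa [div_le_iff₀ hm]

lemma mul_div_mul_sub_sq_le {p p' s a b c : ℝ} (hp : 0 ≤ p) (hp' : 0 ≤ p') (hs : p + p' ≤ s) :
    p * p' / s * (a - b) ^ 2 ≤ p * (a - c) ^ 2 + p' * (b - c) ^ 2 := by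
  rcases (add_nonneg hp hp').trans hs |>.eq_or_lt with rfl | hs0
  · simp
    positivity
  rw [div_mul_eq_mul_div, div_le_iff₀ hs0]
  have key : p * p' * (a - b) ^ 2 ≤ (p + p') * (p * (a - c) ^ 2 + p' * (b - c) ^ 2) := by
    nlinarith [sq_nonneg (p * (a - c) + p' * (b - c))]
  nlinarith [mul_le_mul_of_nonneg_right hs
    (by positivity : 0 ≤ p * (a - c) ^ 2 + p' * (b - c) ^ 2)]

lemma sub_sqrt_sq {a b : ℝ} (ha : 0 ≤ a) (hb : 0 ≤ b) :
    (√a - √b) ^ 2 = a + b - 2 * √(a * b) := by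
  rw [sub_sq, sq_sqrt ha, sq_sqrt hb, sqrt_mul ha]
  ring

lemma summable_of_le_of_le {ι : Type*} {f g h : ι → ℝ} (hgf : ∀ i, g i ≤ f i)
    (hfh : ∀ i, f i ≤ h i) (hg : Summable g) (hh : Summable h) : Summable f := by
  have hsub : Summable fun i => f i - g i :=
    Summable.of_nonneg_of_le (fun i => sub_nonneg.2 (hgf i))
      (fun i => sub_le_sub_right (hfh i) _) (hh.sub hg)
  simpa using hsub.add hg

section Divergences

variable {ι : Type*} {P Q M : ι → ℝ}

def relEntropy (P M : ι → ℝ) : ℝ := ∑' i, P i * log (P i / M i)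

def sqHellinger (P Q : ι → ℝ) : ℝ := ∑' i, (√(P i) - √(Q i)) ^ 2

lemma sqHellinger_nonneg : 0 ≤ sqHellinger P Q := tsum_nonneg fun _ => sq_nonneg _

lemma summable_mul_log_div {c : ℝ} (hP : ∀ i, 0 ≤ P i) (hM : ∀ i, 0 ≤ M i)
    (hPM : ∀ i, P i ≤ c * M i) (hPs : Summable P) (hMs : Summable M) :
    Summable fun i => P i * log (P i / M i) := by
  have hzero : ∀ i, M i = 0 → P i = 0 := fun i h =>
    le_antisymm (by simpa [h] using hPM i) (hP i)
  exact summable_of_le_of_le (fun i => sub_le_mul_log_div (hP i) (hM i) (hzero i))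
    (fun i => mul_log_div_le_mul_log (hP i) (hM i) (hPM i)) (hPs.sub hMs) (hPs.mul_right _)

lemma sum_sqrt_mul_le (hP : ∀ i, 0 ≤ P i) (hQ : ∀ i, 0 ≤ Q i) (hPs : Summable P)
    (hQs : Summable Q) (s : Finset ι) :
    ∑ i ∈ s, √(P i * Q i) ≤ √(∑' i, P i) * √(∑' i, Q i) := by
  simp_rw [sqrt_mul (hP _)]
  refine (Real.sum_sqrt_mul_sqrt_le s hP hQ).trans ?_
  gcongr
  · exact hPs.sum_le_tsum s fun i _ => hP i
  · exact hQs.sum_le_tsum s fun i _ => hQ i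

lemma summable_sqrt_mul (hP : ∀ i, 0 ≤ P i) (hQ : ∀ i, 0 ≤ Q i) (hPs : Summable P)
    (hQs : Summable Q) : Summable fun i => √(P i * Q i) :=
  summable_of_sum_le (fun _ => sqrt_nonneg _) (sum_sqrt_mul_le hP hQ hPs hQs)

lemma tsum_sqrt_mul_le (hP : ∀ i, 0 ≤ P i) (hQ : ∀ i, 0 ≤ Q i) (hPs : Summable P)
    (hQs : Summable Q) : ∑' i, √(P i * Q i) ≤ √(∑' i, P i) * √(∑' i, Q i) :=
  Real.tsum_le_of_sum_le (fun _ => sqrt_nonneg _) (sum_sqrt_mul_le hP hQ hPs hQs)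

lemma hasSum_sub_sqrt_sq {a b : ℝ} (hP : ∀ i, 0 ≤ P i) (hQ : ∀ i, 0 ≤ Q i)
    (hPs : HasSum P a) (hQs : HasSum Q b) :
    HasSum (fun i => (√(P i) - √(Q i)) ^ 2) (a + b - 2 * ∑' i, √(P i * Q i)) :=
  ((hPs.add hQs).sub ((summable_sqrt_mul hP hQ hPs.summable hQs.summable).hasSum.mul_left 2))
    |>.congr_fun fun i => sub_sqrt_sq (hP i) (hQ i)

lemma sqHellinger_eq_two_mul_one_sub (hP : ∀ i, 0 ≤ P i) (hQ : ∀ i, 0 ≤ Q i) (hPs : HasSum P 1)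
    (hQs : HasSum Q 1) : sqHellinger P Q = 2 * (1 - ∑' i, √(P i * Q i)) := by
  rw [sqHellinger, (hasSum_sub_sqrt_sq hP hQ hPs hQs).tsum_eq]
  ring

lemma sqHellinger_le_relEntropy (hP : ∀ i, 0 ≤ P i) (hM : ∀ i, 0 ≤ M i) (hPs : HasSum P 1)
    (hMs : HasSum M 1) (hPM : ∀ i, M i = 0 → P i = 0)
    (hlog : Summable fun i => P i * log (P i / M i)) :
    sqHellinger P M ≤ relEntropy P M := by
  have hsqrt := (summable_sqrt_mul hP hM hPs.summable hMs.summable).hasSum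
  rw [sqHellinger_eq_two_mul_one_sub hP hM hPs hMs]
  exact hasSum_le (fun i => two_mul_sub_sqrt_mul_le_mul_log_div (hP i) (hM i) (hPM i))
    ((hPs.sub hsqrt).mul_left 2) hlog.hasSum

lemma mul_div_mul_sqHellinger_le {p p' s : ℝ} (hp : 0 ≤ p) (hp' : 0 ≤ p') (hs : p + p' ≤ s)
    (hP : ∀ i, 0 ≤ P i) (hQ : ∀ i, 0 ≤ Q i) (hM : ∀ i, 0 ≤ M i) (hPs : Summable P)
    (hQs : Summable Q) (hMs : Summable M) :
    p * p' / s * sqHellinger P Q ≤ p * sqHellinger P M + p' * sqHellinger Q M := by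
  have hPQ := (hasSum_sub_sqrt_sq hP hQ hPs.hasSum hQs.hasSum).summable
  have hPM := (hasSum_sub_sqrt_sq hP hM hPs.hasSum hMs.hasSum).summable
  have hQM := (hasSum_sub_sqrt_sq hQ hM hQs.hasSum hMs.hasSum).summable
  simp only [sqHellinger, ← tsum_mul_left]
  rw [← (hPM.mul_left p).tsum_add (hQM.mul_left p')]
  exact (hPQ.mul_left _).tsum_le_tsum (fun i => mul_div_mul_sub_sq_le hp hp' hs)
    ((hPM.mul_left p).add (hQM.mul_left p'))

end Divergences

section Channels

variable {X X' Y Z : Type*} {W U : X → Y → ℝ} {V : X → Z → ℝ}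

lemma IsChannel.comp (hW : IsChannel W) (f : X' → X) : IsChannel fun x => W (f x) :=
  ⟨fun x => hW.1 (f x), fun x => hW.2 (f x)⟩

lemma IsChannel.prod (hU : IsChannel U) (hV : IsChannel V) :
    IsChannel fun x (p : Y × Z) => U x p.1 * V x p.2 := by
  refine ⟨fun x p => mul_nonneg (hU.1 x p.1) (hV.1 x p.2), fun x => ?_⟩
  simpa using (hU.2 x).mul (hV.2 x)
    ((hU.2 x).summable.mul_of_nonneg (hV.2 x).summable (hU.1 x) (hV.1 x))

lemma Zb_comp (W : X → Y → ℝ) (f : X' → X) (x x' : X') :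
    Zb (fun x => W (f x)) x x' = Zb W (f x) (f x') := rfl

lemma IsChannel.Zb_le_one (hW : IsChannel W) (x x' : X) : Zb W x x' ≤ 1 := by
  rw [Zb]
  simpa [(hW.2 x).tsum_eq, (hW.2 x').tsum_eq] using
    tsum_sqrt_mul_le (hW.1 x) (hW.1 x') (hW.2 x).summable (hW.2 x').summable

lemma IsChannel.sqHellinger_eq (hW : IsChannel W) (x x' : X) :
    sqHellinger (W x) (W x') = 2 * (1 - Zb W x x') :=
  sqHellinger_eq_two_mul_one_sub (hW.1 x) (hW.1 x') (hW.2 x) (hW.2 x')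

variable [Fintype X]

lemma IsChannel.hasSum_sum (hW : IsChannel W) :
    HasSum (fun y => ∑ x, W x y) (Fintype.card X) := by
  simpa using _root_.hasSum_sum fun x (_ : x ∈ Finset.univ) => hW.2 x

lemma IsChannel.le_sum (hW : IsChannel W) (x : X) (y : Y) : W x y ≤ ∑ x', W x' y :=
  Finset.single_le_sum (fun x' _ => hW.1 x' y) (Finset.mem_univ x)

lemma IsChannel.eq_zero_of_sum_eq_zero (hW : IsChannel W) {y : Y} (hy : ∑ x', W x' y = 0)
    (x : X) : W x y = 0 :=
  le_antisymm (hy ▸ hW.le_sum x y) (hW.1 x y)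

def outMean (W : X → Y → ℝ) (y : Y) : ℝ := 1 / (Fintype.card X : ℝ) * ∑ x', W x' y

lemma symCap_eq_relEntropy (W : X → Y → ℝ) :
    symCap W = ((Fintype.card X : ℝ) * log (Fintype.card X))⁻¹ *
      ∑ x, relEntropy (W x) (outMean W) := by
  rw [symCap, Finset.mul_sum]
  refine Finset.sum_congr rfl fun x _ => ?_
  rw [relEntropy, ← tsum_mul_left]
  congr 1 with y
  rw [outMean, logb]
  ring

lemma symCap_comp_perm (W : X → Y → ℝ) (σ : Equiv.Perm X) :
    symCap (fun x => W (σ x)) = symCap W := by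
  have hsum : ∀ y, ∑ x, W (σ x) y = ∑ x, W x y := fun y => Equiv.sum_comp σ (W · y)
  simp only [symCap, hsum]
  exact Fintype.sum_equiv σ _ _ fun x => rfl

end Channels

section ChainRule

variable {X Y Z : Type*} [Fintype X] {W U : X → Y → ℝ} {V : X → Z → ℝ}

lemma outMean_nonneg (hW : IsChannel W) (y : Y) : 0 ≤ outMean W y :=
  mul_nonneg (by positivity) (Finset.sum_nonneg fun x _ => hW.1 x y)

lemma IsChannel.summable_outMean (hW : IsChannel W) : Summable (outMean W) :=
  hW.hasSum_sum.summable.mul_left _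

lemma IsChannel.le_card_mul_outMean (hW : IsChannel W) (x : X) (y : Y) :
    W x y ≤ Fintype.card X * outMean W y := by
  have : Nonempty X := ⟨x⟩
  rw [outMean, ← mul_assoc, mul_one_div_cancel (by positivity), one_mul]
  exact hW.le_sum x y

lemma IsChannel.summable_mul_log_div_outMean (hW : IsChannel W) (x : X) :
    Summable fun y => W x y * log (W x y / outMean W y) :=
  summable_mul_log_div (hW.1 x) (outMean_nonneg hW) (hW.le_card_mul_outMean x)
    (hW.2 x).summable hW.summable_outMean

/-- Law of the second output given the first one, for the channel `x ↦ U(·|x) ⊗ V(·|x)` with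
uniform input; it is the junk value `0` when `∑ₓ U(y|x) = 0`. -/
def condOut (U : X → Y → ℝ) (V : X → Z → ℝ) (y : Y) (z : Z) : ℝ :=
  (∑ x, U x y * V x z) / ∑ x, U x y

lemma condOut_nonneg (hU : IsChannel U) (hV : IsChannel V) (y : Y) (z : Z) :
    0 ≤ condOut U V y z :=
  div_nonneg (Finset.sum_nonneg fun x _ => mul_nonneg (hU.1 x y) (hV.1 x z))
    (Finset.sum_nonneg fun x _ => hU.1 x y)

lemma summable_condOut (hV : IsChannel V) (y : Y) : Summable (condOut U V y) :=
  (summable_sum fun x _ => (hV.2 x).summable.mul_left (U x y)).div_const _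

lemma hasSum_condOut (hV : IsChannel V) {y : Y} (hy : ∑ x, U x y ≠ 0) :
    HasSum (condOut U V y) 1 := by
  have h := (hasSum_sum fun x (_ : x ∈ Finset.univ) =>
    (hV.2 x).mul_left (U x y)).div_const (∑ x, U x y)
  simp only [mul_one, div_self hy] at h
  exact h

lemma mul_le_sum_mul_condOut (hU : IsChannel U) (hV : IsChannel V) (x : X) (y : Y) (z : Z) :
    U x y * V x z ≤ (∑ x', U x' y) * condOut U V y z := by
  by_cases hy : ∑ x', U x' y = 0
  · simp [hy, hU.eq_zero_of_sum_eq_zero hy x]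
  rw [condOut, mul_div_cancel₀ _ hy]
  exact Finset.single_le_sum (f := fun x' => U x' y * V x' z)
    (fun x' _ => mul_nonneg (hU.1 x' y) (hV.1 x' z)) (Finset.mem_univ x)

lemma mul_sqHellinger_le_mul_relEntropy (hU : IsChannel U) (hV : IsChannel V) (x : X) (y : Y) :
    U x y * sqHellinger (V x) (condOut U V y) ≤ U x y * relEntropy (V x) (condOut U V y) := by
  rcases (hU.1 x y).eq_or_lt with h | hxy
  · simp [← h]
  refine mul_le_mul_of_nonneg_left ?_ hxy.le
  have hle : ∀ z, V x z ≤ (∑ x', U x' y) / U x y * condOut U V y z := fun z => by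
    rw [div_mul_eq_mul_div, le_div_iff₀ hxy, mul_comm]
    exact mul_le_sum_mul_condOut hU hV x y z
  have hzero : ∀ z, condOut U V y z = 0 → V x z = 0 := fun z hz =>
    le_antisymm (by simpa [hz] using hle z) (hV.1 x z)
  exact sqHellinger_le_relEntropy (hV.1 x) (condOut_nonneg hU hV y) (hV.2 x)
    (hasSum_condOut hV (hxy.trans_le (hU.le_sum x y)).ne') hzero
    (summable_mul_log_div (hV.1 x) (condOut_nonneg hU hV y) hle (hV.2 x).summable
      (summable_condOut hV y))

lemma mul_log_div_sub_mul_log_div_mul {a b s s' c : ℝ} (ha : 0 ≤ a) (hb : 0 ≤ b) (hs : a ≤ s)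
    (hs' : a * b ≤ s') (hc : c ≠ 0) :
    a * b * log (a * b / (c * s')) - a * log (a / (c * s)) * b =
      a * (b * log (b / (s' / s))) := by
  rcases ha.eq_or_lt with rfl | ha
  · simp
  rcases hb.eq_or_lt with rfl | hb
  · simp
  have hs0 : 0 < s := ha.trans_le hs
  have hs'0 : 0 < s' := (mul_pos ha hb).trans_le hs'
  have hlog : log (a * b / (c * s')) = log (a / (c * s)) + log (b / (s' / s)) := by
    rw [← log_mul (div_ne_zero ha.ne' (mul_ne_zero hc hs0.ne')) (by positivity)]
    congr 1
    field_simp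
  rw [hlog]
  ring

/-- The chain rule `I(X; Y₁Y₂) - I(X; Y₁) = I(X; Y₂ | Y₁)`, one input `x` at a time. -/
lemma hasSum_mul_relEntropy_condOut (hU : IsChannel U) (hV : IsChannel V) (x : X) :
    HasSum (fun y => U x y * relEntropy (V x) (condOut U V y))
      (relEntropy (fun p : Y × Z => U x p.1 * V x p.2)
          (outMean fun x (p : Y × Z) => U x p.1 * V x p.2) -
        relEntropy (U x) (outMean U)) := by
  have : Nonempty X := ⟨x⟩
  have hjoint := ((hU.prod hV).summable_mul_log_div_outMean x).hasSum
  have hmarg := (hU.summable_mul_log_div_outMean x).hasSum.mul (hV.2 x)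
    (summable_mul_of_summable_norm (hU.summable_mul_log_div_outMean x).norm (hV.2 x).summable.norm)
  rw [mul_one] at hmarg
  have hdiff : HasSum (fun p : Y × Z => U x p.1 * (V x p.2 * log (V x p.2 / condOut U V p.1 p.2)))
      (relEntropy (fun p : Y × Z => U x p.1 * V x p.2)
          (outMean fun x (p : Y × Z) => U x p.1 * V x p.2) -
        relEntropy (U x) (outMean U)) :=
    (hjoint.sub hmarg).congr_fun fun p => (mul_log_div_sub_mul_log_div_mul (hU.1 x p.1)
      (hV.1 x p.2) (hU.le_sum x p.1) ((hU.prod hV).le_sum x p)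
      (by positivity)).symm
  simpa only [relEntropy, tsum_mul_left] using
    hdiff.prod_fiberwise fun y => (hdiff.summable.prod_factor y).hasSum

end ChainRule

section CapacityGap

variable {X Y Z : Type*} [Fintype X] {U : X → Y → ℝ} {V : X → Z → ℝ}

lemma mul_div_sum_mul_sqHellinger_le (hU : IsChannel U) (hV : IsChannel V) (x₀ x₀' : X)
    (y : Y) :
    U x₀ y * U x₀' y / (∑ x, U x y) * sqHellinger (V x₀) (V x₀') ≤
      ∑ x, U x y * relEntropy (V x) (condOut U V y) := by
  have hterm : ∀ x, 0 ≤ U x y * sqHellinger (V x) (condOut U V y) := fun x =>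
    mul_nonneg (hU.1 x y) sqHellinger_nonneg
  refine le_trans ?_ (Finset.sum_le_sum fun x _ => mul_sqHellinger_le_mul_relEntropy hU hV x y)
  rcases eq_or_ne x₀ x₀' with rfl | hne
  · simpa [sqHellinger] using Finset.sum_nonneg fun x _ => hterm x
  calc U x₀ y * U x₀' y / (∑ x, U x y) * sqHellinger (V x₀) (V x₀')
      ≤ U x₀ y * sqHellinger (V x₀) (condOut U V y) +
          U x₀' y * sqHellinger (V x₀') (condOut U V y) :=
        mul_div_mul_sqHellinger_le (hU.1 x₀ y) (hU.1 x₀' y)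
          (Finset.add_le_sum (fun x _ => hU.1 x y) (Finset.mem_univ _) (Finset.mem_univ _) hne)
          (hV.1 x₀) (hV.1 x₀') (condOut_nonneg hU hV y) (hV.2 x₀).summable (hV.2 x₀').summable
          (summable_condOut hV y)
    _ ≤ ∑ x, U x y * sqHellinger (V x) (condOut U V y) :=
        Finset.add_le_sum (fun x _ => hterm x) (Finset.mem_univ _) (Finset.mem_univ _) hne

lemma summable_mul_div_sum (hU : IsChannel U) (x₀ x₀' : X) :
    Summable fun y => U x₀ y * U x₀' y / ∑ x, U x y :=
  Summable.of_nonneg_of_le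
    (fun y => div_nonneg (mul_nonneg (hU.1 x₀ y) (hU.1 x₀' y))
      (Finset.sum_nonneg fun x _ => hU.1 x y))
    (fun y => div_le_of_le_mul₀ (Finset.sum_nonneg fun x _ => hU.1 x y) (hU.1 x₀ y)
      (mul_le_mul_of_nonneg_left (hU.le_sum x₀' y) (hU.1 x₀ y)))
    (hU.2 x₀).summable

lemma sq_Zb_le_card_mul_tsum (hU : IsChannel U) (x₀ x₀' : X) :
    Zb U x₀ x₀' ^ 2 ≤ Fintype.card X * ∑' y, U x₀ y * U x₀' y / ∑ x, U x y := by
  have hS : ∀ y, 0 ≤ ∑ x, U x y := fun y => Finset.sum_nonneg fun x _ => hU.1 x y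
  have hprod : ∀ y, U x₀ y * U x₀' y = U x₀ y * U x₀' y / (∑ x, U x y) * ∑ x, U x y := by
    intro y
    by_cases hy : ∑ x, U x y = 0
    · simp [hy, hU.eq_zero_of_sum_eq_zero hy x₀]
    · exact (div_mul_cancel₀ _ hy).symm
  have hZ : Zb U x₀ x₀' ≤
      √(∑' y, U x₀ y * U x₀' y / ∑ x, U x y) * √(Fintype.card X) := by
    rw [Zb, tsum_congr fun y => congrArg sqrt (hprod y), ← hU.hasSum_sum.tsum_eq]
    exact tsum_sqrt_mul_le (fun y => div_nonneg (mul_nonneg (hU.1 x₀ y) (hU.1 x₀' y)) (hS y))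
      hS (summable_mul_div_sum hU x₀ x₀') hU.hasSum_sum.summable
  calc Zb U x₀ x₀' ^ 2
      ≤ (√(∑' y, U x₀ y * U x₀' y / ∑ x, U x y) * √(Fintype.card X)) ^ 2 :=
        pow_le_pow_left₀ (tsum_nonneg fun _ => sqrt_nonneg _) hZ 2
    _ = Fintype.card X * ∑' y, U x₀ y * U x₀' y / ∑ x, U x y := by
        rw [mul_pow, sq_sqrt (tsum_nonneg fun y => div_nonneg (mul_nonneg (hU.1 x₀ y)
          (hU.1 x₀' y)) (hS y)), sq_sqrt (Nat.cast_nonneg _), mul_comm]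

theorem symCap_prod_sub_symCap_ge (hq : 2 ≤ Fintype.card X) (hU : IsChannel U)
    (hV : IsChannel V) (x₀ x₀' : X) :
    2 / ((Fintype.card X : ℝ) ^ 2 * log (Fintype.card X)) * Zb U x₀ x₀' ^ 2 *
        (1 - Zb V x₀ x₀') ≤
      symCap (fun x (p : Y × Z) => U x p.1 * V x p.2) - symCap U := by
  have hlog : 0 < log (Fintype.card X) := log_pos (by exact_mod_cast hq)
  have hZV : 0 ≤ 1 - Zb V x₀ x₀' := sub_nonneg.2 (hV.Zb_le_one x₀ x₀')
  have hgap := hasSum_le (fun y => mul_div_sum_mul_sqHellinger_le hU hV x₀ x₀' y)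
    ((summable_mul_div_sum hU x₀ x₀').hasSum.mul_right _)
    (hasSum_sum fun x _ => hasSum_mul_relEntropy_condOut hU hV x)
  rw [hV.sqHellinger_eq] at hgap
  rw [symCap_eq_relEntropy, symCap_eq_relEntropy, ← mul_sub, ← Finset.sum_sub_distrib]
  calc 2 / ((Fintype.card X : ℝ) ^ 2 * log (Fintype.card X)) * Zb U x₀ x₀' ^ 2 *
        (1 - Zb V x₀ x₀')
      ≤ 2 / ((Fintype.card X : ℝ) ^ 2 * log (Fintype.card X)) *
          (Fintype.card X * ∑' y, U x₀ y * U x₀' y / ∑ x, U x y) * (1 - Zb V x₀ x₀') := by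
        gcongr
        exact sq_Zb_le_card_mul_tsum hU x₀ x₀'
    _ = ((Fintype.card X : ℝ) * log (Fintype.card X))⁻¹ *
          ((∑' y, U x₀ y * U x₀' y / ∑ x, U x y) * (2 * (1 - Zb V x₀ x₀'))) := by
        field_simp
    _ ≤ _ := by gcongr

end CapacityGap

lemma periodic_mem_of_succ_mem {α : Type*} {z : ℕ → α} {N : ℕ} (hz : Function.Periodic z N)
    {S : Set α} (hS : ∀ i, z i ∈ S → z (i + 1) ∈ S) {i₀ : ℕ} (h₀ : z i₀ ∈ S) (hN : 0 < N)
    (j : ℕ) : z j ∈ S := by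
  have hafter : ∀ k, z (i₀ + k) ∈ S := fun k => by
    induction k with
    | zero => exact h₀
    | succ k ih => exact hS _ ih
  rw [← hz.nat_mul i₀ j, Nat.cast_id,
    ← Nat.add_sub_cancel' ((Nat.le_mul_of_pos_right i₀ hN).trans (Nat.le_add_left _ j))]
  exact hafter _

lemma average_notMem_Ioo_of_periodic {z : ℕ → ℝ} {N : ℕ} (hz : Function.Periodic z N)
    (hN : 0 < N) {δ : ℝ} (hδ : δ ≤ 1 - δ) (hstep : ∀ i, δ < z i → 1 - δ < z (i + 1)) :
    1 / (N : ℝ) * ∑ i ∈ Finset.range N, z i ∉ Set.Ioo δ (1 - δ) := by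
  rintro ⟨hlo, hhi⟩
  have hN' : (0 : ℝ) < N := by exact_mod_cast hN
  rw [one_div_mul_eq_div, lt_div_iff₀ hN'] at hlo
  rw [one_div_mul_eq_div, div_lt_iff₀ hN'] at hhi
  obtain ⟨i₀, -, hi₀⟩ : ∃ i ∈ Finset.range N, δ < z i :=
    Finset.exists_lt_of_sum_lt (by simpa [mul_comm] using hlo)
  have hall : ∀ j, z j ∈ Set.Ioi (1 - δ) :=
    periodic_mem_of_succ_mem hz (fun i hi => hstep i (hδ.trans_lt hi)) (hstep i₀ hi₀) hN
  have := Finset.sum_lt_sum_of_nonempty (f := fun _ => 1 - δ)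
    (Finset.nonempty_range_iff.2 hN.ne') fun j _ => Set.mem_Ioi.1 (hall j)
  simp only [Finset.sum_const, Finset.card_range, nsmul_eq_mul] at this
  linarith

lemma one_sub_lt_of_sq_mul_one_sub_lt {a b δ : ℝ} (hδ : 0 < δ) (ha : δ < a)
    (h : a ^ 2 * (1 - b) < δ ^ 3) : 1 - δ < b := by
  by_contra! hb
  have hsq : δ ^ 2 ≤ a ^ 2 := pow_le_pow_left₀ hδ.le ha.le 2
  nlinarith [mul_le_mul hsq (by linarith : δ ≤ 1 - b) hδ.le (by positivity)]

lemma ZbAvgPerm_notMem_Ioo {X Y : Type*} [Fintype X] {W : X → Y → ℝ} (ρ : Equiv.Perm X) {δ : ℝ}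
    (hδ : δ ∈ Set.Ioo 0 (1 / 2))
    (hgap : ∀ u u', Zb W u u' ^ 2 * (1 - Zb W (ρ u) (ρ u')) < δ ^ 3) (x x' : X) :
    ZbAvgPerm W ρ x x' ∉ Set.Ioo δ (1 - δ) := by
  have hρ : ρ ^ (Fintype.card X).factorial = 1 := by
    rw [← Fintype.card_perm]
    exact pow_card_eq_one
  refine average_notMem_Ioo_of_periodic (z := fun i => Zb W ((ρ ^ i) x) ((ρ ^ i) x'))
    (fun i => by simp only [pow_add, hρ, mul_one]) (Nat.factorial_pos _) (by linarith [hδ.2])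
    fun i hi => one_sub_lt_of_sq_mul_one_sub_lt hδ.1 hi ?_
  simpa only [pow_succ', Equiv.Perm.mul_apply] using hgap ((ρ ^ i) x) ((ρ ^ i) x')

theorem polarization_lemma_general {X : Type*} [Fintype X] (hq : 2 ≤ Fintype.card X)
    {Yn : ℕ → Type*}
    (Wn : ∀ n, X → Yn n → ℝ) (hWn : ∀ n, IsChannel (Wn n))
    (σ τ : Equiv.Perm X)
    (hconv : Tendsto (fun n =>
        symCap (fun (x : X) (p : Yn n × Yn n) => Wn n (σ x) p.1 * Wn n (τ x) p.2) -
          symCap (Wn n)) atTop (nhds 0)) :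
    ∀ δ ∈ Set.Ioo (0 : ℝ) (1 / 2), ∃ m, ∀ n, m ≤ n → ∀ x x' : X,
      ZbAvgPerm (Wn n) (τ * σ⁻¹) x x' ∉ Set.Ioo δ (1 - δ) := by
  intro δ hδ
  set c : ℝ := 2 / ((Fintype.card X : ℝ) ^ 2 * log (Fintype.card X))
  have hc : 0 < c := by
    have : 0 < log (Fintype.card X : ℝ) := log_pos (by exact_mod_cast hq)
    positivity
  obtain ⟨m, hm⟩ := eventually_atTop.1
    (hconv.eventually (gt_mem_nhds (mul_pos hc (pow_pos hδ.1 3))))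
  refine ⟨m, fun n hn => ZbAvgPerm_notMem_Ioo _ hδ fun u u' => ?_⟩
  have hgap := symCap_prod_sub_symCap_ge hq ((hWn n).comp σ) ((hWn n).comp τ) (σ⁻¹ u) (σ⁻¹ u')
  simp only [Zb_comp, Equiv.Perm.coe_inv, Equiv.apply_symm_apply, symCap_comp_perm,
    mul_assoc] at hgap
  exact lt_of_mul_lt_mul_left (hgap.trans_lt (hm n hn)) hc.le

/-- if `I(W'_n) - I(W_n) → 0` then eventually every average
Bhattacharyya parameter `Z^{τ∘σ⁻¹}_{x,x'}(W_n)` is outside `(δ, 1-δ)`. -/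
theorem polarization_lemma {X : Type*} [Fintype X] (hq : 2 ≤ Fintype.card X)
    {Yn : ℕ → Type*} [∀ n, Countable (Yn n)]
    (Wn : ∀ n, X → Yn n → ℝ) (hWn : ∀ n, IsChannel (Wn n))
    (σ τ : Equiv.Perm X)
    (hconv : Tendsto (fun n =>
        symCap (fun (x : X) (p : Yn n × Yn n) => Wn n (σ x) p.1 * Wn n (τ x) p.2) -
          symCap (Wn n)) atTop (nhds 0)) :
    ∀ δ ∈ Set.Ioo (0 : ℝ) (1 / 2), ∃ m, ∀ n, m ≤ n → ∀ x x' : X,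
      ZbAvgPerm (Wn n) (τ * σ⁻¹) x x' ∉ Set.Ioo δ (1 - δ) :=
  polarization_lemma_general hq Wn hWn σ τ hconv

end Polar
end
end
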